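/- arXiv:1312.0502 — 11 statements merged into one kernel-verified Lean document; each statement's English description precedes it below -/
import Mathlib

section
/- Let G be a connected simple graph with vertex set V and let ℓ : V → ℤ be a labelling such that |ℓ(u) − ℓ(w)| = 1 for every edge {u,w} of G. Suppose v ∈ V satisfies ℓ(v) = 0 and v is the unique local minimum of ℓ, i.e. every vertex u ≠ v has at least one neighbour w with ℓ(w) < ℓ(u). Then ℓ(u) = dist(v,u) for every vertex u, where dist denotes the graph distance in G. -/
private lemma walk_label_bound {V : Type*} (G : SimpleGraph V) (ℓ : V → ℤ)
    (hsuit : ∀ u w : V, G.Adj u w → |ℓ u - ℓ w| = 1) :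
    ∀ {a b : V} (p : G.Walk a b), |ℓ a - ℓ b| ≤ (p.length : ℤ) := by
  intro a b p
  induction p with
  | nil => simp
  | @cons x y z hadj q ih =>
      calc |ℓ x - ℓ z| ≤ |ℓ x - ℓ y| + |ℓ y - ℓ z| := abs_sub_le _ _ _
        _ ≤ 1 + (q.length : ℤ) := by
            have := hsuit _ _ hadj; omega
        _ = (((SimpleGraph.Walk.cons hadj q).length : ℕ) : ℤ) := by
            simp [SimpleGraph.Walk.length_cons]; push_cast; ring

/-- Claim 3: a suitable labelling of a finite connected simple graph with a unique
local minimum `v` of label `0` is the geodesic labelling with respect to `v`. -/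
theorem suitable_labelling_eq_dist {V : Type*} [Fintype V] (G : SimpleGraph V)
    (hconn : G.Connected) (ℓ : V → ℤ)
    (hsuit : ∀ u w : V, G.Adj u w → |ℓ u - ℓ w| = 1)
    (v : V) (hv : ℓ v = 0)
    (hmin : ∀ u : V, u ≠ v → ∃ w : V, G.Adj u w ∧ ℓ w < ℓ u) :
    ∀ u : V, ℓ u = (G.dist v u : ℤ) := by
  -- v is the global minimum, so ℓ ≥ 0
  have hnonneg : ∀ u : V, 0 ≤ ℓ u := by
    obtain ⟨m, -, hm⟩ := Finset.exists_min_image Finset.univ ℓ ⟨v, Finset.mem_univ v⟩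
    have hmv : m = v := by
      by_contra hne
      obtain ⟨w, -, hw⟩ := hmin m hne
      exact absurd (hm w (Finset.mem_univ w)) (not_le.mpr hw)
    intro u
    have := hm u (Finset.mem_univ u)
    rw [hmv, hv] at this
    exact this
  -- dist v u ≤ ℓ u, by strong induction on (ℓ u).toNat
  have hge : ∀ n : ℕ, ∀ u : V, (ℓ u).toNat = n → (G.dist v u : ℤ) ≤ ℓ u := by
    intro n
    induction n using Nat.strong_induction_on with
    | _ n ih =>
      intro u hn
      by_cases huv : u = v
      · subst huv; simp [hv]
      · obtain ⟨w, hadj, hw⟩ := hmin u huv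
        have h1 := hsuit u w hadj
        have hw' : ℓ w = ℓ u - 1 := by
          rcases abs_eq (by norm_num : (0:ℤ) ≤ 1) |>.mp h1 with h | h <;> omega
        have hwn : (ℓ w).toNat < n := by
          have := hnonneg w; omega
        have hdw := ih _ hwn w rfl
        have hdist : G.dist v u ≤ G.dist v w + 1 := by
          calc G.dist v u ≤ G.dist v w + G.dist w u := hconn.dist_triangle
            _ ≤ G.dist v w + 1 := by
                have : G.dist w u ≤ 1 := by simpa using G.dist_le hadj.symm.toWalk
                omega
        have : (G.dist v u : ℤ) ≤ (G.dist v w : ℤ) + 1 := by exact_mod_cast hdist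
        omega
  intro u
  have hreach : G.Reachable v u := hconn v u
  obtain ⟨p, hp⟩ := hreach.exists_walk_length_eq_dist
  have hle : ℓ u ≤ (G.dist v u : ℤ) := by
    have := walk_label_bound G ℓ hsuit p
    rw [hp] at this
    have h0 := hnonneg u
    rw [hv, abs_sub_comm, sub_zero] at this
    exact le_trans (le_abs_self _) this
  have := hge (ℓ u).toNat u rfl
  omega
end

section
/- With the general-maps setup: for every integer i ≥ 1, 1 + t·T_i·T_{i+1} = (1 + tT²) · (1 − y^{i+1})(1 − y^{i+3}) / (1 − y^{i+2})². -/
/-- General-maps setup: the two-point function `R_i = 1 + t T_i T_{i+1}`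
takes the factorized form `R (1-y^{i+1})(1-y^{i+3})/(1-y^{i+2})²` with `R = 1 + tT²`. -/
theorem genMaps_Ri_factorized {K : Type*} [Field K] (t T y : K)
    (ht : t ≠ 0) (hy : y ≠ 0) (hT : T ≠ 0)
    (hTeq : T = 1 + 3 * t * T ^ 2)
    (hyeq : t * T ^ 2 * (1 + y + y ^ 2) = y)
    (hyn : ∀ n : ℕ, 1 ≤ n → 1 - y ^ n ≠ 0)
    (Ti : ℕ → K)
    (hTi : ∀ i : ℕ, Ti i =
      T * ((1 - y ^ i) * (1 - y ^ (i + 3))) / ((1 - y ^ (i + 1)) * (1 - y ^ (i + 2)))) :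
    ∀ i : ℕ, 1 ≤ i →
      1 + t * Ti i * Ti (i + 1) =
        (1 + t * T ^ 2) * ((1 - y ^ (i + 1)) * (1 - y ^ (i + 3))) / (1 - y ^ (i + 2)) ^ 2 := by
  intro i hi
  have h1 := hyn (i+1) (by omega)
  have h2 := hyn (i+2) (by omega)
  have h3 := hyn (i+3) (by omega)
  have h4 := hyn (i+4) (by omega)
  rw [hTi i, hTi (i+1)]
  field_simp
  linear_combination (-(y^i) * (1-y)^2) * hyeq
end

section
/- With the real general-maps setup: for every integer i ≥ 0, S · (1 − y^{i+1})(1 − y^{i+4}) / ((1 − y^{i+2})(1 − y^{i+3})) = S − √(Ry) · ( (1 − y^{i+2})/(1 − y^{i+3}) − (1 − y^{i+1})/(1 − y^{i+2}) ), where S = √t·T and R = 1 + tT². In particular Ry = tT²(1+y)². -/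
/-- Real general-maps setup: the second equality in the formula for `S_i`,
together with `Ry = tT²(1+y)²`. -/
theorem genMaps_Si_identity (t T y : ℝ)
    (ht : 0 < t) (hT : 0 < T) (hy0 : 0 < y) (hy1 : y < 1)
    (hTeq : T = 1 + 3 * t * T ^ 2)
    (hyeq : t * T ^ 2 * (1 + y + y ^ 2) = y)
    (R S : ℝ) (hR : R = 1 + t * T ^ 2) (hS : S = Real.sqrt t * T) :
    (∀ i : ℕ,
      S * (1 - y ^ (i + 1)) * (1 - y ^ (i + 4)) / ((1 - y ^ (i + 2)) * (1 - y ^ (i + 3))) =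
        S - Real.sqrt (R * y) *
          ((1 - y ^ (i + 2)) / (1 - y ^ (i + 3)) - (1 - y ^ (i + 1)) / (1 - y ^ (i + 2))))
    ∧ R * y = t * T ^ 2 * (1 + y) ^ 2 := by
  have hRy : R * y = t * T ^ 2 * (1 + y) ^ 2 := by rw [hR]; nlinarith [hyeq]
  refine ⟨?_, hRy⟩
  intro i
  have hsq : Real.sqrt (R * y) = Real.sqrt t * T * (1 + y) := by
    rw [hRy, show t * T ^ 2 * (1 + y) ^ 2 = t * (T * (1 + y)) ^ 2 by ring,
      Real.sqrt_mul ht.le, Real.sqrt_sq (by positivity : (0:ℝ) ≤ T * (1 + y))]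
    ring
  have hne : ∀ n : ℕ, 1 - y ^ (n + 1) ≠ 0 := fun n => by
    have h : y ^ (n + 1) < 1 := pow_lt_one₀ hy0.le hy1 (Nat.succ_ne_zero n)
    linarith
  have h2 := hne (i + 1)
  have h3 := hne (i + 2)
  rw [hS, hsq]
  field_simp
  ring
end

section
/- With the bipartite-maps setup: T_0 = 0 and, for every integer i ≥ 1, T_i · (1 − t(T_{i−1} + T_{i+1})) = 1. -/
set_option maxHeartbeats 1600000 in
/-- Bipartite-maps setup: the explicit `T_i` satisfy `T_0 = 0` and the recursive
decomposition equation `T_i (1 - t(T_{i-1} + T_{i+1})) = 1` for `i ≥ 1`. -/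
theorem bipMaps_Ti_recursion {K : Type*} [Field K] (t T y : K)
    (ht : t ≠ 0) (hy : y ≠ 0) (hT : T ≠ 0)
    (hTeq : T = 1 + 2 * t * T ^ 2)
    (hyeq : t * T ^ 2 * (1 + y ^ 2) = y)
    (hyn : ∀ n : ℕ, 1 ≤ n → 1 - y ^ n ≠ 0)
    (Ti : ℕ → K)
    (hTi : ∀ i : ℕ, Ti i =
      T * ((1 - y ^ i) * (1 - y ^ (i + 4))) / ((1 - y ^ (i + 1)) * (1 - y ^ (i + 3)))) :
    Ti 0 = 0 ∧ ∀ i : ℕ, 1 ≤ i →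
      Ti i * (1 - t * (Ti (i - 1) + Ti (i + 1))) = 1 := by
  have h1y2 : (1 : K) + y ^ 2 ≠ 0 := by
    intro h
    apply hy
    have := hyeq
    rw [h, mul_zero] at this
    exact this.symm
  have h1y : (1 : K) + y ≠ 0 := by
    intro h
    exact hyn 2 (by norm_num) (by linear_combination (1 - y) * h)
  have hTy : T * (1 + y ^ 2) = (1 + y) ^ 2 := by
    linear_combination (1 + y ^ 2) * hTeq + 2 * hyeq
  have hty : t * (1 + y) ^ 4 = y * (1 + y ^ 2) := by
    linear_combination (1 + y ^ 2) * hyeq - t * (T * (1 + y ^ 2) + (1 + y) ^ 2) * hTy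
  have Tv : T = (1 + y) ^ 2 / (1 + y ^ 2) := by
    field_simp
    linear_combination hTy
  have tv : t = y * (1 + y ^ 2) / (1 + y) ^ 4 := by
    field_simp
    linear_combination hty
  constructor
  · rw [hTi 0]
    norm_num
  · intro i hi
    obtain ⟨k, rfl⟩ : ∃ k, i = k + 1 := ⟨i - 1, by omega⟩
    have n1 : 1 - y ^ k * y ^ 1 ≠ 0 := by
      have := hyn (k + 1) (by omega); rwa [pow_add] at this
    have n2 : 1 - y ^ k * y ^ 2 ≠ 0 := by
      have := hyn (k + 2) (by omega); rwa [pow_add] at this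
    have n3 : 1 - y ^ k * y ^ 3 ≠ 0 := by
      have := hyn (k + 3) (by omega); rwa [pow_add] at this
    have n4 : 1 - y ^ k * y ^ 4 ≠ 0 := by
      have := hyn (k + 4) (by omega); rwa [pow_add] at this
    have n5 : 1 - y ^ k * y ^ 5 ≠ 0 := by
      have := hyn (k + 5) (by omega); rwa [pow_add] at this
    have e1 : Ti (k + 1) = T * ((1 - y ^ k * y ^ 1) * (1 - y ^ k * y ^ 5)) /
        ((1 - y ^ k * y ^ 2) * (1 - y ^ k * y ^ 4)) := by
      rw [hTi]; ring_nf
    have e0 : Ti k = T * ((1 - y ^ k) * (1 - y ^ k * y ^ 4)) /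
        ((1 - y ^ k * y ^ 1) * (1 - y ^ k * y ^ 3)) := by
      rw [hTi]; ring_nf
    have e2 : Ti (k + 2) = T * ((1 - y ^ k * y ^ 2) * (1 - y ^ k * y ^ 6)) /
        ((1 - y ^ k * y ^ 3) * (1 - y ^ k * y ^ 5)) := by
      rw [hTi]; ring_nf
    have hk : k + 1 - 1 = k := rfl
    rw [hk, e1, e0, e2]
    generalize y ^ k = a at n1 n2 n3 n4 n5 ⊢
    set A0 : K := 1 - a with hA0
    set A1 : K := 1 - a * y ^ 1 with hA1
    set A2 : K := 1 - a * y ^ 2 with hA2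
    set A3 : K := 1 - a * y ^ 3 with hA3
    set A4 : K := 1 - a * y ^ 4 with hA4
    set A5 : K := 1 - a * y ^ 5 with hA5
    set A6 : K := 1 - a * y ^ 6 with hA6
    have hpoly : (1 + y) ^ 2 * A1 * A3 * A5 - y * (A0 * A4 * A5 + A1 * A2 * A6)
        = (1 + y ^ 2) * (A2 * A3 * A4) := by
      rw [hA0, hA1, hA2, hA3, hA4, hA5, hA6]; ring
    have hbig : (T * (1 + y ^ 2)) * (A1 ^ 2 * A3 * A5 ^ 2)
        - (t * T ^ 2 * (1 + y ^ 2)) * ((A0 * A4 * A5 + A1 * A2 * A6) * (A1 * A5))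
        = (1 + y ^ 2) * (A1 * A2 * A3 * A4 * A5) := by
      linear_combination A1 * A5 * hpoly + A1 ^ 2 * A3 * A5 ^ 2 * hTy
        - A1 * A5 * (A0 * A4 * A5 + A1 * A2 * A6) * hyeq
    have hclear : T * (A1 * A5) * (A1 * A3 * A5 - t * T * (A0 * A4 * A5 + A1 * A2 * A6))
        = A1 * A2 * A3 * A4 * A5 := by
      apply mul_left_cancel₀ h1y2
      linear_combination hbig
    rw [div_mul_eq_mul_div, div_eq_one_iff_eq (mul_ne_zero n2 n4)]
    rw [div_add_div _ _ (mul_ne_zero n1 n3) (mul_ne_zero n3 n5)]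
    have hD : A1 * A3 * (A3 * A5) ≠ 0 :=
      mul_ne_zero (mul_ne_zero n1 n3) (mul_ne_zero n3 n5)
    rw [← mul_div_assoc, one_sub_div hD, ← mul_div_assoc, div_eq_iff hD]
    linear_combination A3 * hclear
end

section
/- With the bipartite-maps setup: for every integer i ≥ 1, 1 + t·T_i·T_{i+1} = (1 + tT²) · (1 − y^{i+1})(1 − y^{i+4}) / ((1 − y^{i+2})(1 − y^{i+3})). -/
set_option maxHeartbeats 800000

/-- Bipartite-maps setup: the two-point function `R_i = 1 + t T_i T_{i+1}` takes the
factorized form `R (1-y^{i+1})(1-y^{i+4})/((1-y^{i+2})(1-y^{i+3}))` with `R = 1 + tT²`. -/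
theorem bipMaps_Ri_factorized {K : Type*} [Field K] (t T y : K)
    (ht : t ≠ 0) (hy : y ≠ 0) (hT : T ≠ 0)
    (hTeq : T = 1 + 2 * t * T ^ 2)
    (hyeq : t * T ^ 2 * (1 + y ^ 2) = y)
    (hyn : ∀ n : ℕ, 1 ≤ n → 1 - y ^ n ≠ 0)
    (Ti : ℕ → K)
    (hTi : ∀ i : ℕ, Ti i =
      T * ((1 - y ^ i) * (1 - y ^ (i + 4))) / ((1 - y ^ (i + 1)) * (1 - y ^ (i + 3)))) :
    ∀ i : ℕ, 1 ≤ i →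
      1 + t * Ti i * Ti (i + 1) =
        (1 + t * T ^ 2) * ((1 - y ^ (i + 1)) * (1 - y ^ (i + 4))) /
          ((1 - y ^ (i + 2)) * (1 - y ^ (i + 3))) := by
  intro i hi
  have h1 := hyn (i + 1) (by omega)
  have h3 := hyn (i + 3) (by omega)
  have h4 := hyn (i + 1 + 1) (by omega)
  have h5 := hyn (i + 1 + 3) (by omega)
  have h6 := hyn (i + 2) (by omega)
  have h7 := hyn (i + 4) (by omega)
  have hB : ((1 - y ^ (i + 2)) * (1 - y ^ (i + 3))) ≠ 0 := mul_ne_zero h6 h3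
  have e1 : Ti i * Ti (i + 1) =
      T ^ 2 * ((1 - y ^ i) * (1 - y ^ (i + 5))) / ((1 - y ^ (i + 2)) * (1 - y ^ (i + 3))) := by
    rw [hTi i, hTi (i + 1)]
    field_simp
  rw [mul_assoc, e1, eq_div_iff hB]
  field_simp
  linear_combination (-(1 - y) * y ^ i * (1 - y ^ 2)) * hyeq
end

section
/- With the bipartite-maps setup: for every integer i ≥ 1, 1 + t²·T_i·T_{i+1}·T_{i+2} = (1 + t²T³) · (1 − y^{i+2})(1 − y^{i+4}) / (1 − y^{i+3})². -/
set_option maxHeartbeats 2000000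

/-- Bipartite-maps setup: the two-point function of general hypermaps
`𝓡_i = 1 + t² T_i T_{i+1} T_{i+2}` takes the factorized form
`𝓡 (1-y^{i+2})(1-y^{i+4})/(1-y^{i+3})²` with `𝓡 = 1 + t²T³`. -/
theorem hypMaps_Ri_factorized {K : Type*} [Field K] (t T y : K)
    (ht : t ≠ 0) (hy : y ≠ 0) (hT : T ≠ 0)
    (hTeq : T = 1 + 2 * t * T ^ 2)
    (hyeq : t * T ^ 2 * (1 + y ^ 2) = y)
    (hyn : ∀ n : ℕ, 1 ≤ n → 1 - y ^ n ≠ 0)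
    (Ti : ℕ → K)
    (hTi : ∀ i : ℕ, Ti i =
      T * ((1 - y ^ i) * (1 - y ^ (i + 4))) / ((1 - y ^ (i + 1)) * (1 - y ^ (i + 3)))) :
    ∀ i : ℕ, 1 ≤ i →
      1 + t ^ 2 * Ti i * Ti (i + 1) * Ti (i + 2) =
        (1 + t ^ 2 * T ^ 3) * ((1 - y ^ (i + 2)) * (1 - y ^ (i + 4))) /
          (1 - y ^ (i + 3)) ^ 2 := by
  intro i hi
  have h1py2 : (1 : K) + y ^ 2 ≠ 0 := by
    intro h
    apply hy
    rw [← hyeq, h, mul_zero]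
  have hTmul : T * (1 + y ^ 2) = (1 + y) ^ 2 := by
    linear_combination (1 + y ^ 2) * hTeq + 2 * hyeq
  have hc : t ^ 2 * T ^ 3 * ((1 + y) ^ 2 * (1 + y ^ 2)) = y ^ 2 := by
    linear_combination (t * T ^ 2 * (1 + y ^ 2) + y) * hyeq -
      t ^ 2 * T ^ 3 * (1 + y ^ 2) * hTmul
  have key : ∀ x : K,
      (1 - x * y ^ 3) ^ 2 + t ^ 2 * T ^ 3 * ((1 - x) * (1 - x * y ^ 6)) =
        (1 + t ^ 2 * T ^ 3) * ((1 - x * y ^ 2) * (1 - x * y ^ 4)) := by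
    intro x
    linear_combination (-(x * (1 - y) ^ 2)) * hc
  have h1 := hyn (i + 1) (by omega)
  have h2 := hyn (i + 2) (by omega)
  have h3 := hyn (i + 3) (by omega)
  have h4 := hyn (i + 4) (by omega)
  have h5 := hyn (i + 5) (by omega)
  rw [hTi i, hTi (i + 1), hTi (i + 2)]
  rw [show i + 1 + 4 = i + 5 from rfl, show i + 1 + 1 = i + 2 from rfl,
      show i + 1 + 3 = i + 4 from rfl, show i + 2 + 4 = i + 6 from rfl,
      show i + 2 + 1 = i + 3 from rfl, show i + 2 + 3 = i + 5 from rfl]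
  field_simp
  linear_combination key (y ^ i)
end

section
/- Let K be a field and let y₁, y₂ ∈ K be distinct and nonzero with y₁ + 1/y₁ + y₂ + 1/y₂ + 2 = 0. Set p₁ = y₁ + y₁² + y₁³, p₂ = y₂ + y₂² + y₂³, p′₁ = y₁ + y₁², p′₂ = y₂ + y₂², and assume p₁ ≠ p₂ and p′₁ ≠ p′₂. Then for every integer i ≥ 0: 1 − ((p₁ − y₁⁴p₂)/(p₁ − p₂))·y₁^i − ((p₂ − y₂⁴p₁)/(p₂ − p₁))·y₂^i + ((y₂⁴p₁ − y₁⁴p₂)/(p₁ − p₂))·(y₁y₂)^i = 1 − ((p′₁ − y₁³p′₂)/(p′₁ − p′₂))·y₁^i − ((p′₂ − y₂³p′₁)/(p′₂ − p′₁))·y₂^i + ((y₂³p′₁ − y₁³p′₂)/(p′₁ − p′₂))·(y₁y₂)^i. -/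
/-- The function `v_i(y₁,y₂)` of 4-constellations coincides with the corresponding
function expected for 3-constellations under the relation
`y₁ + 1/y₁ + y₂ + 1/y₂ + 2 = 0`. -/
theorem vi_four_eq_three_constellations {K : Type*} [Field K] (y1 y2 : K)
    (hy1 : y1 ≠ 0) (hy2 : y2 ≠ 0) (hne : y1 ≠ y2)
    (hrel : y1 + 1 / y1 + y2 + 1 / y2 + 2 = 0)
    (p1 p2 p1' p2' : K)
    (hp1 : p1 = y1 + y1 ^ 2 + y1 ^ 3) (hp2 : p2 = y2 + y2 ^ 2 + y2 ^ 3)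
    (hp1' : p1' = y1 + y1 ^ 2) (hp2' : p2' = y2 + y2 ^ 2)
    (hpne : p1 ≠ p2) (hpne' : p1' ≠ p2') :
    ∀ i : ℕ,
      1 - (p1 - y1 ^ 4 * p2) / (p1 - p2) * y1 ^ i
        - (p2 - y2 ^ 4 * p1) / (p2 - p1) * y2 ^ i
        + (y2 ^ 4 * p1 - y1 ^ 4 * p2) / (p1 - p2) * (y1 * y2) ^ i =
      1 - (p1' - y1 ^ 3 * p2') / (p1' - p2') * y1 ^ i
        - (p2' - y2 ^ 3 * p1') / (p2' - p1') * y2 ^ i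
        + (y2 ^ 3 * p1' - y1 ^ 3 * p2') / (p1' - p2') * (y1 * y2) ^ i := by
  have hR : y1 ^ 2 * y2 + y1 * y2 ^ 2 + y1 + y2 + 2 * (y1 * y2) = 0 := by
    field_simp at hrel
    linear_combination hrel
  have hd : p1 - p2 ≠ 0 := sub_ne_zero.mpr hpne
  have hd' : p1' - p2' ≠ 0 := sub_ne_zero.mpr hpne'
  have hd2 : p2 - p1 ≠ 0 := sub_ne_zero.mpr (Ne.symm hpne)
  have hd2' : p2' - p1' ≠ 0 := sub_ne_zero.mpr (Ne.symm hpne')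
  have h1 : (p1 - y1 ^ 4 * p2) / (p1 - p2) = (p1' - y1 ^ 3 * p2') / (p1' - p2') := by
    rw [div_eq_div_iff hd hd']
    subst hp1 hp2 hp1' hp2'
    linear_combination (-y1^4*y2^2 + y1^3*y2^3 + y1^3*y2^2 + y1^3*y2 - y1^2*y2^3
      - y1^2*y2^2 - y1^2*y2 + y1*y2^2) * hR
  have h2 : (p2 - y2 ^ 4 * p1) / (p2 - p1) = (p2' - y2 ^ 3 * p1') / (p2' - p1') := by
    rw [div_eq_div_iff hd2 hd2']
    subst hp1 hp2 hp1' hp2'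
    linear_combination (y1^3*y2^3 - y1^3*y2^2 - y1^2*y2^4 + y1^2*y2^3 - y1^2*y2^2
      + y1^2*y2 + y1*y2^3 - y1*y2^2) * hR
  have h3 : (y2 ^ 4 * p1 - y1 ^ 4 * p2) / (p1 - p2) = (y2 ^ 3 * p1' - y1 ^ 3 * p2') / (p1' - p2') := by
    rw [div_eq_div_iff hd hd']
    subst hp1 hp2 hp1' hp2'
    linear_combination (-y1^4*y2^2 + 2*y1^3*y2^3 + y1^3*y2 - y1^2*y2^4
      - 2*y1^2*y2^2 + y1*y2^3) * hR
  intro i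
  rw [h1, h2, h3]
end

section
/- Let K be a field, p ≥ 2 an integer, and a, b ∈ K nonzero. Define, for an integer m ≥ 2, P_m(x) = x + x² + ⋯ + x^{m−1}, and define H(x) = Σ_{k=1}^{p−1} (p − k)(x^k + x^{−k}). Then (b^p·P_p(a) − P_p(b))·(P_{p+1}(a) − P_{p+1}(b)) − (b^{p+1}·P_{p+1}(a) − P_{p+1}(b))·(P_p(a) − P_p(b)) = (ab)^p·(1 − b)·(H(a) − H(b)). -/
private lemma geom_mul {K : Type*} [Field K] (x : K) (m : ℕ) :
    (x - 1) * ∑ k ∈ Finset.Icc 1 m, x ^ k = x ^ (m + 1) - x := by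
  induction m with
  | zero => simp
  | succ n ih =>
      rw [Finset.sum_Icc_succ_top (by omega), mul_add, ih]
      ring

private lemma geom_inv {K : Type*} [Field K] (x : K) (hx : x ≠ 0) (m : ℕ) :
    x ^ m * ((x - 1) * ∑ k ∈ Finset.Icc 1 m, x⁻¹ ^ k) = x ^ m - 1 := by
  induction m with
  | zero => simp
  | succ n ih =>
      have key : x ^ (n + 1) * x⁻¹ ^ (n + 1) = 1 := by
        rw [← mul_pow, mul_inv_cancel₀ hx, one_pow]
      rw [Finset.sum_Icc_succ_top (by omega)]
      linear_combination x * ih + (x - 1) * key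

private lemma Tform {K : Type*} [Field K] (x : K) (q : ℕ) :
    (x - 1) ^ 2 * ∑ k ∈ Finset.Icc 1 (q + 1), ((q + 2 - k : ℕ) : K) * x ^ k
      = x ^ (q + 3) - ((q : K) + 2) * x ^ 2 + ((q : K) + 1) * x := by
  induction q with
  | zero => norm_num; ring
  | succ n ih =>
      rw [Finset.sum_Icc_succ_top (by omega)]
      have hshift : ∑ k ∈ Finset.Icc 1 (n + 1), ((n + 1 + 2 - k : ℕ) : K) * x ^ k
          = (∑ k ∈ Finset.Icc 1 (n + 1), ((n + 2 - k : ℕ) : K) * x ^ k)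
            + ∑ k ∈ Finset.Icc 1 (n + 1), x ^ k := by
        rw [← Finset.sum_add_distrib]
        refine Finset.sum_congr rfl fun k hk => ?_
        simp only [Finset.mem_Icc] at hk
        have h1 : n + 1 + 2 - k = (n + 2 - k) + 1 := by omega
        rw [h1]; push_cast; ring
      have hg := geom_mul x (n + 1)
      have h2 : (n + 1) + 2 - ((n + 1) + 1) = 1 := by omega
      rw [h2, hshift, mul_add, mul_add, ih]
      push_cast
      linear_combination (x - 1) * hg

private lemma Tinv {K : Type*} [Field K] (x : K) (hx : x ≠ 0) (q : ℕ) :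
    x ^ (q + 1) * (x - 1) ^ 2 * ∑ k ∈ Finset.Icc 1 (q + 1), ((q + 2 - k : ℕ) : K) * x⁻¹ ^ k
      = 1 - ((q : K) + 2) * x ^ (q + 1) + ((q : K) + 1) * x ^ (q + 2) := by
  induction q with
  | zero =>
      have key : x ^ 1 * x⁻¹ ^ 1 = 1 := by
        rw [← mul_pow, mul_inv_cancel₀ hx, one_pow]
      norm_num
      linear_combination (x - 1) ^ 2 * key
  | succ n ih =>
      have key : x ^ (n + 2) * x⁻¹ ^ (n + 2) = 1 := by
        rw [← mul_pow, mul_inv_cancel₀ hx, one_pow]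
      rw [Finset.sum_Icc_succ_top (by omega)]
      have hshift : ∑ k ∈ Finset.Icc 1 (n + 1), ((n + 1 + 2 - k : ℕ) : K) * x⁻¹ ^ k
          = (∑ k ∈ Finset.Icc 1 (n + 1), ((n + 2 - k : ℕ) : K) * x⁻¹ ^ k)
            + ∑ k ∈ Finset.Icc 1 (n + 1), x⁻¹ ^ k := by
        rw [← Finset.sum_add_distrib]
        refine Finset.sum_congr rfl fun k hk => ?_
        simp only [Finset.mem_Icc] at hk
        have h1 : n + 1 + 2 - k = (n + 2 - k) + 1 := by omega
        rw [h1]; push_cast; ring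
      have hg := geom_inv x hx (n + 1)
      have h2 : (n + 1) + 2 - ((n + 1) + 1) = 1 := by omega
      rw [h2, hshift]
      push_cast
      linear_combination x * ih + x * (x - 1) * hg + (x - 1) ^ 2 * key

private lemma sumcK {K : Type*} [Field K] (q : ℕ) :
    (2 : K) * ∑ k ∈ Finset.Icc 1 (q + 1), ((q + 2 - k : ℕ) : K)
      = ((q : K) + 1) * ((q : K) + 2) := by
  induction q with
  | zero => norm_num
  | succ n ih =>
      rw [Finset.sum_Icc_succ_top (by omega)]
      have hshift : ∑ k ∈ Finset.Icc 1 (n + 1), ((n + 1 + 2 - k : ℕ) : K)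
          = (∑ k ∈ Finset.Icc 1 (n + 1), ((n + 2 - k : ℕ) : K))
            + ∑ k ∈ Finset.Icc 1 (n + 1), (1 : K) := by
        rw [← Finset.sum_add_distrib]
        refine Finset.sum_congr rfl fun k hk => ?_
        simp only [Finset.mem_Icc] at hk
        have h1 : n + 1 + 2 - k = (n + 2 - k) + 1 := by omega
        rw [h1]; push_cast; ring
      have h2 : (n + 1) + 2 - ((n + 1) + 1) = 1 := by omega
      rw [h2, hshift]
      simp only [Finset.sum_const, Nat.card_Icc, smul_eq_mul, mul_one]
      push_cast
      linear_combination ih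

set_option maxHeartbeats 2000000 in
/-- The key polynomial identity behind equation (cpq):
`(b^p P_p(a) − P_p(b))(P_{p+1}(a) − P_{p+1}(b)) − (b^{p+1} P_{p+1}(a) − P_{p+1}(b))(P_p(a) − P_p(b))
 = (ab)^p (1 − b)(H(a) − H(b))`. -/
theorem constellations_key_identity {K : Type*} [Field K] (p : ℕ) (hp : 2 ≤ p)
    (a b : K) (ha : a ≠ 0) (hb : b ≠ 0)
    (P : ℕ → K → K)
    (hP : ∀ (m : ℕ) (x : K), P m x = ∑ k ∈ Finset.Icc 1 (m - 1), x ^ k)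
    (H : K → K)
    (hH : ∀ x : K, H x = ∑ k ∈ Finset.Icc 1 (p - 1), ((p - k : ℕ) : K) * (x ^ k + x⁻¹ ^ k)) :
    (b ^ p * P p a - P p b) * (P (p + 1) a - P (p + 1) b)
      - (b ^ (p + 1) * P (p + 1) a - P (p + 1) b) * (P p a - P p b)
      = (a * b) ^ p * (1 - b) * (H a - H b) := by
  obtain ⟨q, rfl⟩ : ∃ q, p = q + 2 := ⟨p - 2, by omega⟩
  have keyP : ∀ (m : ℕ) (x : K), x ≠ 1 → P (m + 2) x = (x ^ (m + 2) - x) / (x - 1) := by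
    intro m x hx
    rw [hP, eq_div_iff (sub_ne_zero.mpr hx)]
    have h : m + 2 - 1 = m + 1 := rfl
    rw [h]
    linear_combination geom_mul x (m + 1)
  have hHsplit : ∀ x : K, H x
      = (∑ k ∈ Finset.Icc 1 (q + 1), ((q + 2 - k : ℕ) : K) * x ^ k)
        + ∑ k ∈ Finset.Icc 1 (q + 1), ((q + 2 - k : ℕ) : K) * x⁻¹ ^ k := by
    intro x
    rw [hH, ← Finset.sum_add_distrib]
    exact Finset.sum_congr rfl fun k _ => by ring
  have keyH : ∀ x : K, x ≠ 0 → x ≠ 1 →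
      H x = (x ^ (q + 3) - ((q : K) + 2) * x ^ 2 + ((q : K) + 1) * x) / (x - 1) ^ 2
        + (1 - ((q : K) + 2) * x ^ (q + 1) + ((q : K) + 1) * x ^ (q + 2))
            / (x ^ (q + 1) * (x - 1) ^ 2) := by
    intro x hx0 hx1
    have hx1' : x - 1 ≠ 0 := sub_ne_zero.mpr hx1
    have t1 : (∑ k ∈ Finset.Icc 1 (q + 1), ((q + 2 - k : ℕ) : K) * x ^ k)
        = (x ^ (q + 3) - ((q : K) + 2) * x ^ 2 + ((q : K) + 1) * x) / (x - 1) ^ 2 := by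
      rw [eq_div_iff (pow_ne_zero 2 hx1')]
      linear_combination Tform x q
    have t2 : (∑ k ∈ Finset.Icc 1 (q + 1), ((q + 2 - k : ℕ) : K) * x⁻¹ ^ k)
        = (1 - ((q : K) + 2) * x ^ (q + 1) + ((q : K) + 1) * x ^ (q + 2))
            / (x ^ (q + 1) * (x - 1) ^ 2) := by
      rw [eq_div_iff (mul_ne_zero (pow_ne_zero _ hx0) (pow_ne_zero 2 hx1'))]
      linear_combination Tinv x hx0 q
    rw [hHsplit, t1, t2]
  by_cases hb1 : b = 1
  · subst hb1
    simp only [one_pow, one_mul]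
    ring
  have hb1' : b - 1 ≠ 0 := sub_ne_zero.mpr hb1
  have eb1 : P (q + 2) b = (b ^ (q + 2) - b) / (b - 1) := keyP q b hb1
  have eb2 : P (q + 2 + 1) b = (b ^ (q + 3) - b) / (b - 1) := by
    have h := keyP (q + 1) b hb1
    convert h using 3 <;> ring
  have eHb := keyH b hb hb1
  by_cases ha1 : a = 1
  · subst ha1
    have ePa1 : P (q + 2) 1 = ((q : K) + 1) := by
      rw [hP]; simp [Nat.card_Icc]
    have ePa2 : P (q + 2 + 1) 1 = ((q : K) + 2) := by
      rw [hP]; simp [Nat.card_Icc]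
    have eHa : H 1 = ((q : K) + 1) * ((q : K) + 2) := by
      rw [hHsplit]
      simp only [one_pow, inv_one, mul_one]
      rw [← Finset.sum_add_distrib]
      have : ∑ k ∈ Finset.Icc 1 (q + 1), (((q + 2 - k : ℕ) : K) + ((q + 2 - k : ℕ) : K))
          = 2 * ∑ k ∈ Finset.Icc 1 (q + 1), ((q + 2 - k : ℕ) : K) := by
        rw [Finset.mul_sum]
        exact Finset.sum_congr rfl fun k _ => by ring
      rw [this, sumcK]
    rw [ePa1, ePa2, eb1, eb2, eHa, eHb, mul_pow]
    simp only [pow_succ]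
    have hB : b ^ q ≠ 0 := pow_ne_zero _ hb
    generalize b ^ q = B at hB ⊢
    field_simp
    ring
  · have ha1' : a - 1 ≠ 0 := sub_ne_zero.mpr ha1
    have rA1 : (a - 1) * P (q + 2) a = a ^ (q + 2) - a := by
      rw [hP]; exact geom_mul a (q + 1)
    have rA2 : (a - 1) * P (q + 2 + 1) a = a ^ (q + 3) - a := by
      rw [hP]; exact geom_mul a (q + 2)
    have rB1 : (b - 1) * P (q + 2) b = b ^ (q + 2) - b := by
      rw [hP]; exact geom_mul b (q + 1)
    have rB2 : (b - 1) * P (q + 2 + 1) b = b ^ (q + 3) - b := by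
      rw [hP]; exact geom_mul b (q + 2)
    have rHa : (a - 1) ^ 2 * a ^ (q + 1) * H a
        = a ^ (q + 1) * (a ^ (q + 3) - ((q : K) + 2) * a ^ 2 + ((q : K) + 1) * a)
          + (1 - ((q : K) + 2) * a ^ (q + 1) + ((q : K) + 1) * a ^ (q + 2)) := by
      rw [hHsplit]
      linear_combination a ^ (q + 1) * Tform a q + Tinv a ha q
    have rHb : (b - 1) ^ 2 * b ^ (q + 1) * H b
        = b ^ (q + 1) * (b ^ (q + 3) - ((q : K) + 2) * b ^ 2 + ((q : K) + 1) * b)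
          + (1 - ((q : K) + 2) * b ^ (q + 1) + ((q : K) + 1) * b ^ (q + 2)) := by
      rw [hHsplit]
      linear_combination b ^ (q + 1) * Tform b q + Tinv b hb q
    have e1 : (a - 1) * (b - 1) * (b ^ (q + 2) * P (q + 2) a - P (q + 2) b)
        = b ^ (q + 2) * (b - 1) * (a ^ (q + 2) - a) - (a - 1) * (b ^ (q + 2) - b) := by
      linear_combination b ^ (q + 2) * (b - 1) * rA1 - (a - 1) * rB1
    have e2 : (a - 1) * (b - 1) * (P (q + 2 + 1) a - P (q + 2 + 1) b)
        = (b - 1) * (a ^ (q + 3) - a) - (a - 1) * (b ^ (q + 3) - b) := by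
      linear_combination (b - 1) * rA2 - (a - 1) * rB2
    have e3 : (a - 1) * (b - 1) * (b ^ (q + 2 + 1) * P (q + 2 + 1) a - P (q + 2 + 1) b)
        = b ^ (q + 3) * (b - 1) * (a ^ (q + 3) - a) - (a - 1) * (b ^ (q + 3) - b) := by
      linear_combination b ^ (q + 3) * (b - 1) * rA2 - (a - 1) * rB2
    have e4 : (a - 1) * (b - 1) * (P (q + 2) a - P (q + 2) b)
        = (b - 1) * (a ^ (q + 2) - a) - (a - 1) * (b ^ (q + 2) - b) := by
      linear_combination (b - 1) * rA1 - (a - 1) * rB1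
    have e5 : (a - 1) ^ 2 * (b - 1) ^ 2 * (a ^ (q + 1) * b ^ (q + 1)) * (H a - H b)
        = (b - 1) ^ 2 * b ^ (q + 1)
            * (a ^ (q + 1) * (a ^ (q + 3) - ((q : K) + 2) * a ^ 2 + ((q : K) + 1) * a)
              + (1 - ((q : K) + 2) * a ^ (q + 1) + ((q : K) + 1) * a ^ (q + 2)))
          - (a - 1) ^ 2 * a ^ (q + 1)
            * (b ^ (q + 1) * (b ^ (q + 3) - ((q : K) + 2) * b ^ 2 + ((q : K) + 1) * b)
              + (1 - ((q : K) + 2) * b ^ (q + 1) + ((q : K) + 1) * b ^ (q + 2))) := by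
      linear_combination (b - 1) ^ 2 * b ^ (q + 1) * rHa - (a - 1) ^ 2 * a ^ (q + 1) * rHb
    have hC : ((a - 1) ^ 2 * (b - 1) ^ 2 * (a ^ (q + 1) * b ^ (q + 1)) : K) ≠ 0 :=
      mul_ne_zero (mul_ne_zero (pow_ne_zero 2 ha1') (pow_ne_zero 2 hb1'))
        (mul_ne_zero (pow_ne_zero _ ha) (pow_ne_zero _ hb))
    apply mul_left_cancel₀ hC
    linear_combination
      (a ^ (q + 1) * b ^ (q + 1)) * ((a - 1) * (b - 1) * (P (q + 2 + 1) a - P (q + 2 + 1) b)) * e1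
      + (a ^ (q + 1) * b ^ (q + 1))
          * (b ^ (q + 2) * (b - 1) * (a ^ (q + 2) - a) - (a - 1) * (b ^ (q + 2) - b)) * e2
      - (a ^ (q + 1) * b ^ (q + 1)) * ((a - 1) * (b - 1) * (P (q + 2) a - P (q + 2) b)) * e3
      - (a ^ (q + 1) * b ^ (q + 1))
          * (b ^ (q + 3) * (b - 1) * (a ^ (q + 3) - a) - (a - 1) * (b ^ (q + 3) - b)) * e4
      - (a * b) ^ (q + 2) * (1 - b) * e5
end

section
/- Let K be a field, p ≥ 2 an integer, and a, b ∈ K distinct and nonzero, with H(a) = H(b), where H(x) = Σ_{k=1}^{p−1}(p − k)(x^k + x^{−k}). For m ∈ {p, p+1} set P_m(x) = x + x² + ⋯ + x^{m−1} and Q_m(x) = x^{−1} + x^{−2} + ⋯ + x^{−(m−1)}. Assume that for m ∈ {p, p+1} the quantities P_m(a) − P_m(b), P_m(a) − Q_m(b) and Q_m(a) − P_m(b) are all nonzero. Then ((P_{p+1}(a) − P_{p+1}(b))·(Q_{p+1}(a) − Q_{p+1}(b))) / ((P_{p+1}(a) − Q_{p+1}(b))·(Q_{p+1}(a) − P_{p+1}(b)))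 = ((P_p(a) − P_p(b))·(Q_p(a) − Q_p(b))) / ((P_p(a) − Q_p(b))·(Q_p(a) − P_p(b))). -/
private lemma refl_sum {K : Type*} [Field K] (x : K) (hx : x ≠ 0) (n : ℕ) :
    x ^ (n + 1) * ∑ k ∈ Finset.Icc 1 n, x⁻¹ ^ k = ∑ k ∈ Finset.Icc 1 n, x ^ k := by
  rw [Finset.mul_sum]
  rw [← Finset.Ico_add_one_right_eq_Icc, Finset.sum_Ico_eq_sum_range, Finset.sum_Ico_eq_sum_range]
  simp only [Nat.add_sub_cancel, Nat.succ_sub_one]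
  rw [← Finset.sum_range_reflect (fun j => x ^ (1 + j)) n]
  apply Finset.sum_congr rfl
  intro i hi
  simp only [Finset.mem_range] at hi
  have h1 : 1 + (n - 1 - i) = n - i := by omega
  rw [h1]
  have h2 : n + 1 = (n - i) + (1 + i) := by omega
  rw [h2, pow_add]
  field_simp
  rw [← mul_pow, mul_one_div_cancel hx, one_pow]

private lemma key_sum {K : Type*} [Field K] (x : K) (hx : x ≠ 0) (m : ℕ) :
    (1 + ∑ k ∈ Finset.Icc 1 m, x ^ k) * (1 + ∑ k ∈ Finset.Icc 1 m, x⁻¹ ^ k) =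
      ((m + 1 : ℕ) : K) + ∑ k ∈ Finset.Icc 1 m, ((m + 1 - k : ℕ) : K) * (x ^ k + x⁻¹ ^ k) := by
  induction m with
  | zero => simp
  | succ m ih =>
      have hS : (∑ k ∈ Finset.Icc 1 (m + 1), x ^ k)
          = (∑ k ∈ Finset.Icc 1 m, x ^ k) + x ^ (m + 1) :=
        Finset.sum_Icc_succ_top (by omega) _
      have hT : (∑ k ∈ Finset.Icc 1 (m + 1), x⁻¹ ^ k)
          = (∑ k ∈ Finset.Icc 1 m, x⁻¹ ^ k) + x⁻¹ ^ (m + 1) :=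
        Finset.sum_Icc_succ_top (by omega) _
      have hR : (∑ k ∈ Finset.Icc 1 (m + 1), ((m + 1 + 1 - k : ℕ) : K) * (x ^ k + x⁻¹ ^ k))
          = (∑ k ∈ Finset.Icc 1 m, ((m + 1 + 1 - k : ℕ) : K) * (x ^ k + x⁻¹ ^ k))
            + ((m + 1 + 1 - (m + 1) : ℕ) : K) * (x ^ (m + 1) + x⁻¹ ^ (m + 1)) :=
        Finset.sum_Icc_succ_top (by omega) _
      have hr1 : x ^ (m + 1) * ∑ k ∈ Finset.Icc 1 m, x⁻¹ ^ k
          = ∑ k ∈ Finset.Icc 1 m, x ^ k := refl_sum x hx m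
      have hr2 : x⁻¹ ^ (m + 1) * ∑ k ∈ Finset.Icc 1 m, x ^ k
          = ∑ k ∈ Finset.Icc 1 m, x⁻¹ ^ k := by
        have := refl_sum x⁻¹ (inv_ne_zero hx) m
        simpa [inv_inv] using this
      have hsplit : (∑ k ∈ Finset.Icc 1 m, ((m + 1 + 1 - k : ℕ) : K) * (x ^ k + x⁻¹ ^ k))
          = (∑ k ∈ Finset.Icc 1 m, ((m + 1 - k : ℕ) : K) * (x ^ k + x⁻¹ ^ k))
            + ∑ k ∈ Finset.Icc 1 m, (x ^ k + x⁻¹ ^ k) := by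
        rw [← Finset.sum_add_distrib]
        apply Finset.sum_congr rfl
        intro k hk
        simp only [Finset.mem_Icc] at hk
        have : (m + 1 + 1 - k : ℕ) = (m + 1 - k) + 1 := by omega
        rw [this]
        push_cast
        ring
      have hxx : x ^ (m + 1) * x⁻¹ ^ (m + 1) = 1 := by
        rw [← mul_pow, mul_inv_cancel₀ hx, one_pow]
      rw [hS, hT, hR, hsplit, Finset.sum_add_distrib]
      have e : (1 + ((∑ k ∈ Finset.Icc 1 m, x ^ k) + x ^ (m + 1))) *
          (1 + ((∑ k ∈ Finset.Icc 1 m, x⁻¹ ^ k) + x⁻¹ ^ (m + 1)))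
          = (1 + ∑ k ∈ Finset.Icc 1 m, x ^ k) * (1 + ∑ k ∈ Finset.Icc 1 m, x⁻¹ ^ k)
            + x ^ (m + 1) * (∑ k ∈ Finset.Icc 1 m, x⁻¹ ^ k)
            + x⁻¹ ^ (m + 1) * (∑ k ∈ Finset.Icc 1 m, x ^ k)
            + x ^ (m + 1) * x⁻¹ ^ (m + 1)
            + x ^ (m + 1) + x⁻¹ ^ (m + 1) := by ring
      rw [e, ih, hr1, hr2, hxx]
      have hc : (m + 1 + 1 - (m + 1) : ℕ) = 1 := by omega
      rw [hc]
      push_cast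
      ring

private lemma alg_lemma {K : Type*} [Field K] (A' B' u v : K) (hu : u ≠ 0) (hv : v ≠ 0)
    (hC : (1 + u * A') * (1 + A') = (1 + v * B') * (1 + B')) :
    (u * A' + u - (v * B' + v)) * (A' + u⁻¹ - (B' + v⁻¹)) *
        ((u * A' - B') * (A' - v * B')) =
      (u * A' - v * B') * (A' - B') *
        ((u * A' + u - (B' + v⁻¹)) * (A' + u⁻¹ - (v * B' + v))) := by
  field_simp
  linear_combination ((u-1)*(v-1)*(u*A'*(v+1) - v*B'*(u+1))) * hC

/-- If `H(a) = H(b)`, the cross-ratio built from `P_{p+1}, Q_{p+1}` equals the one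
built from `P_p, Q_p`: consistency of the conjectured two-point function of
`p`-constellations with that of `(p+1)`-regular constellations. -/
theorem constellations_cross_ratio {K : Type*} [Field K] (p : ℕ) (hp : 2 ≤ p)
    (a b : K) (ha : a ≠ 0) (hb : b ≠ 0) (hab : a ≠ b)
    (P Q : ℕ → K → K)
    (hP : ∀ (m : ℕ) (x : K), P m x = ∑ k ∈ Finset.Icc 1 (m - 1), x ^ k)
    (hQ : ∀ (m : ℕ) (x : K), Q m x = ∑ k ∈ Finset.Icc 1 (m - 1), x⁻¹ ^ k)
    (H : K → K)
    (hH : ∀ x : K, H x = ∑ k ∈ Finset.Icc 1 (p - 1), ((p - k : ℕ) : K) * (x ^ k + x⁻¹ ^ k))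
    (hHeq : H a = H b)
    (hne : ∀ m ∈ ({p, p + 1} : Set ℕ),
      P m a - P m b ≠ 0 ∧ P m a - Q m b ≠ 0 ∧ Q m a - P m b ≠ 0) :
    (P (p + 1) a - P (p + 1) b) * (Q (p + 1) a - Q (p + 1) b) /
        ((P (p + 1) a - Q (p + 1) b) * (Q (p + 1) a - P (p + 1) b)) =
      (P p a - P p b) * (Q p a - Q p b) /
        ((P p a - Q p b) * (Q p a - P p b)) := by
  obtain ⟨m, rfl⟩ : ∃ m, p = m + 1 := ⟨p - 1, by omega⟩
  have hsub : (m + 1) - 1 = m := by omega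
  have hsub' : (m + 1 + 1) - 1 = m + 1 := by omega
  have hHa : H a = (1 + P (m+1) a) * (1 + Q (m+1) a) - ((m + 1 : ℕ) : K) := by
    rw [hH, hP, hQ, hsub, key_sum a ha m]; ring
  have hHb : H b = (1 + P (m+1) b) * (1 + Q (m+1) b) - ((m + 1 : ℕ) : K) := by
    rw [hH, hP, hQ, hsub, key_sum b hb m]; ring
  have hC : (1 + P (m+1) a) * (1 + Q (m+1) a) = (1 + P (m+1) b) * (1 + Q (m+1) b) := by
    have h := hHeq
    rw [hHa, hHb] at h
    linear_combination h
  have hrelA : P (m+1) a = a ^ (m+1) * Q (m+1) a := by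
    rw [hP, hQ, hsub, refl_sum a ha m]
  have hrelB : P (m+1) b = b ^ (m+1) * Q (m+1) b := by
    rw [hP, hQ, hsub, refl_sum b hb m]
  have hPA : P (m+1+1) a = P (m+1) a + a ^ (m+1) := by
    rw [hP, hP, hsub, hsub', Finset.sum_Icc_succ_top (by omega)]
  have hPB : P (m+1+1) b = P (m+1) b + b ^ (m+1) := by
    rw [hP, hP, hsub, hsub', Finset.sum_Icc_succ_top (by omega)]
  have hQA : Q (m+1+1) a = Q (m+1) a + (a ^ (m+1))⁻¹ := by
    rw [hQ, hQ, hsub, hsub', Finset.sum_Icc_succ_top (by omega), inv_pow]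
  have hQB : Q (m+1+1) b = Q (m+1) b + (b ^ (m+1))⁻¹ := by
    rw [hQ, hQ, hsub, hsub', Finset.sum_Icc_succ_top (by omega), inv_pow]
  obtain ⟨d0a, d0b, d0c⟩ := hne (m+1) (Or.inl rfl)
  obtain ⟨d1a, d1b, d1c⟩ := hne (m+1+1) (Or.inr rfl)
  rw [div_eq_div_iff (mul_ne_zero d1b d1c) (mul_ne_zero d0b d0c)]
  have hu : a ^ (m+1) ≠ 0 := pow_ne_zero _ ha
  have hv : b ^ (m+1) ≠ 0 := pow_ne_zero _ hb
  rw [hrelA, hrelB] at hC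
  have key := alg_lemma (Q (m+1) a) (Q (m+1) b) (a ^ (m+1)) (b ^ (m+1)) hu hv hC
  rw [hPA, hPB, hQA, hQB, hrelA, hrelB]
  linear_combination key
end

section
/- With the two-parameter general-maps setup: for every integer i ≥ 1, 1 + t·U_i·T_{i+1} = R · (1 − αy^{i+1})(1 − αy^{i+3}) / (1 − αy^{i+2})², where R = (1 − αy²)² / ((1 − αy)(1 − αy³)); moreover R = 1 + t·U·T. -/
set_option maxHeartbeats 4000000


/-- Two-parameter general-maps setup: the two-point function `R_i = 1 + t U_i T_{i+1}`
takes the factorized form `R (1-αy^{i+1})(1-αy^{i+3})/(1-αy^{i+2})²` with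
`R = (1-αy²)²/((1-αy)(1-αy³))`, and `R = 1 + tUT`. -/
theorem genMaps2par_Ri_factorized {K : Type*} [Field K] (y α : K)
    (hy : y ≠ 0) (hα : α ≠ 0)
    (hyn : ∀ n : ℕ, 1 ≤ n → 1 - y ^ n ≠ 0)
    (hαyn : ∀ n : ℕ, 1 ≤ n → 1 - α * y ^ n ≠ 0)
    (D : K)
    (hD : D = 1 + y + α * y - 6 * α * y ^ 2 + α * y ^ 3 + α ^ 2 * y ^ 3 + α ^ 2 * y ^ 4)
    (hDne : D ≠ 0)
    (t z T U : K)
    (ht : t = y * (1 - α * y) ^ 3 * (1 - α * y ^ 3) / D ^ 2)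
    (hz : z = α * (1 - y) ^ 3 * (1 - α ^ 2 * y ^ 3) / ((1 - α * y) ^ 3 * (1 - α * y ^ 3)))
    (hU : U = D / ((1 - α * y) * (1 - α * y ^ 3)))
    (hT : T = α * (1 - y) ^ 2 * D / ((1 - α * y) ^ 3 * (1 - α * y ^ 3)))
    (Ti Ui : ℕ → K)
    (hTi : ∀ i : ℕ, Ti i = T * ((1 - y ^ i) * (1 - α ^ 2 * y ^ (i + 3))) /
        ((1 - α * y ^ (i + 1)) * (1 - α * y ^ (i + 2))))
    (hUi : ∀ i : ℕ, Ui i = U * ((1 - y ^ i) * (1 - α * y ^ (i + 3))) /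
        ((1 - y ^ (i + 1)) * (1 - α * y ^ (i + 2))))
    (R : K) (hR : R = (1 - α * y ^ 2) ^ 2 / ((1 - α * y) * (1 - α * y ^ 3))) :
    (∀ i : ℕ, 1 ≤ i →
      1 + t * Ui i * Ti (i + 1) =
        R * ((1 - α * y ^ (i + 1)) * (1 - α * y ^ (i + 3))) / (1 - α * y ^ (i + 2)) ^ 2) ∧
    R = 1 + t * U * T := by
  have hαy1 : (1 : K) - α * y ≠ 0 := by simpa using hαyn 1 le_rfl
  have hαy3 : (1 : K) - α * y ^ 3 ≠ 0 := hαyn 3 (by norm_num)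
  have htUT : t * U * T = α * y * (1 - y) ^ 2 / ((1 - α * y) * (1 - α * y ^ 3)) := by
    rw [ht, hU, hT]
    field_simp
  constructor
  · intro i hi
    have h1 : (1 : K) - α * (y ^ i * y) ≠ 0 := by
      have := hαyn (i + 1) (by omega); rwa [pow_add, pow_one] at this
    have h2 : (1 : K) - α * (y ^ i * y ^ 2) ≠ 0 := by
      have := hαyn (i + 2) (by omega); rwa [pow_add] at this
    have h3 : (1 : K) - α * (y ^ i * y ^ 3) ≠ 0 := by
      have := hαyn (i + 3) (by omega); rwa [pow_add] at this
    have h6 : (1 : K) - y ^ i * y ≠ 0 := by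
      have := hyn (i + 1) (by omega); rwa [pow_add, pow_one] at this
    have step : t * Ui i * Ti (i + 1) = (t * U * T) *
        (((1 - y ^ i) * (1 - α * y ^ (i + 3))) * ((1 - y ^ (i + 1)) * (1 - α ^ 2 * y ^ (i + 4)))) /
        (((1 - y ^ (i + 1)) * (1 - α * y ^ (i + 2))) * ((1 - α * y ^ (i + 2)) * (1 - α * y ^ (i + 3)))) := by
      have k1 : (1 : K) - y ^ (i + 1) ≠ 0 := hyn (i + 1) (by omega)
      have k2 : (1 : K) - α * y ^ (i + 2) ≠ 0 := hαyn (i + 2) (by omega)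
      have k3 : (1 : K) - α * y ^ (i + 1 + 1) ≠ 0 := hαyn (i + 1 + 1) (by omega)
      have k4 : (1 : K) - α * y ^ (i + 1 + 2) ≠ 0 := hαyn (i + 1 + 2) (by omega)
      rw [hUi, hTi]
      field_simp
    rw [step, htUT, hR]
    simp only [pow_add, pow_one]
    generalize y ^ i = a at h1 h2 h3 h6 ⊢
    have e2 : (1 : K) - α * y ^ 2 * a ≠ 0 := by convert h2 using 2; ring
    have e3 : (1 : K) - α * y ^ 3 * a ≠ 0 := by convert h3 using 2; ring
    have e6 : (1 : K) - y * a ≠ 0 := by convert h6 using 2; ring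
    field_simp
    ring
  · rw [hR, htUT]
    field_simp
    ring
end

section
/- With the two-parameter bipartite-maps setup: for every integer i ≥ 1, 1 + t·U_i·T_{i+1} = R · (1 − αy^{i+1})(1 − αy^{i+4}) / ((1 − αy^{i+2})(1 − αy^{i+3})), where R = (1 − αy²)(1 − αy³) / ((1 − αy)(1 − αy⁴)); moreover R = 1 + t·U·T. -/
set_option maxHeartbeats 1000000 in
private lemma bipMaps2par_aux1 {K : Type*} [Field K] (y α x : K)
    (hy1 : 1 + y ≠ 0)
    (h1 : 1 - α * y ≠ 0) (h2 : 1 - α * y ^ 2 ≠ 0) (h4 : 1 - α * y ^ 4 ≠ 0)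
    (hx1 : 1 - x * y ≠ 0) (hb2 : 1 - α * (x * y ^ 2) ≠ 0)
    (hb3 : 1 - α * (x * y ^ 3) ≠ 0) (hb4 : 1 - α * (x * y ^ 4) ≠ 0)
    (t T U R : K)
    (ht : t = y * (1 - α * y) ^ 2 * (1 - α * y ^ 4) / ((1 + y) ^ 2 * (1 - α * y ^ 2) ^ 3))
    (hT : T = α * (1 - y ^ 2) ^ 2 * (1 - α * y ^ 2) / ((1 - α * y) ^ 2 * (1 - α * y ^ 4)))
    (hU : U = (1 + y) * (1 - α * y ^ 2) ^ 2 / ((1 - α * y) * (1 - α * y ^ 4)))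
    (hR : R = (1 - α * y ^ 2) * (1 - α * y ^ 3) / ((1 - α * y) * (1 - α * y ^ 4))) :
    1 + t * (U * ((1 - x) * (1 - α * (x * y ^ 4))) / ((1 - x * y) * (1 - α * (x * y ^ 3))))
        * (T * ((1 - x * y) * (1 - α ^ 2 * (x * y ^ 5))) /
            ((1 - α * (x * y ^ 2)) * (1 - α * (x * y ^ 4)))) =
      R * ((1 - α * (x * y)) * (1 - α * (x * y ^ 4))) /
        ((1 - α * (x * y ^ 2)) * (1 - α * (x * y ^ 3))) := by
  have hD : (1 + y) ^ 2 * (1 - α * y ^ 2) ^ 3 *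
      ((1 - α * y) * (1 - α * y ^ 4) * ((1 - x * y) * (1 - α * (x * y ^ 3)))) *
      ((1 - α * y) ^ 2 * (1 - α * y ^ 4) * ((1 - α * (x * y ^ 2)) * (1 - α * (x * y ^ 4)))) ≠ 0 := by
    apply_rules [mul_ne_zero, pow_ne_zero]
  have hB : (1 - α * y) * (1 - α * y ^ 4) * ((1 - α * (x * y ^ 2)) * (1 - α * (x * y ^ 3))) ≠ 0 := by
    apply_rules [mul_ne_zero]
  rw [ht, hT, hU, hR]
  simp only [div_mul_eq_mul_div, mul_div_assoc', div_div]
  rw [add_div' _ _ _ hD, div_eq_div_iff hD hB]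
  ring

set_option maxHeartbeats 1000000 in
private lemma bipMaps2par_aux2 {K : Type*} [Field K] (y α : K)
    (hy1 : 1 + y ≠ 0)
    (h1 : 1 - α * y ≠ 0) (h2 : 1 - α * y ^ 2 ≠ 0) (h4 : 1 - α * y ^ 4 ≠ 0)
    (t T U R : K)
    (ht : t = y * (1 - α * y) ^ 2 * (1 - α * y ^ 4) / ((1 + y) ^ 2 * (1 - α * y ^ 2) ^ 3))
    (hT : T = α * (1 - y ^ 2) ^ 2 * (1 - α * y ^ 2) / ((1 - α * y) ^ 2 * (1 - α * y ^ 4)))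
    (hU : U = (1 + y) * (1 - α * y ^ 2) ^ 2 / ((1 - α * y) * (1 - α * y ^ 4)))
    (hR : R = (1 - α * y ^ 2) * (1 - α * y ^ 3) / ((1 - α * y) * (1 - α * y ^ 4))) :
    R = 1 + t * U * T := by
  have hD : (1 + y) ^ 2 * (1 - α * y ^ 2) ^ 3 * ((1 - α * y) * (1 - α * y ^ 4)) *
      ((1 - α * y) ^ 2 * (1 - α * y ^ 4)) ≠ 0 := by
    apply_rules [mul_ne_zero, pow_ne_zero]
  have hB : (1 - α * y) * (1 - α * y ^ 4) ≠ 0 := mul_ne_zero h1 h4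
  rw [hR, ht, hT, hU]
  simp only [div_mul_eq_mul_div, mul_div_assoc', div_div]
  rw [add_div' _ _ _ hD, div_eq_div_iff hB hD]
  ring

/-- Two-parameter bipartite-maps setup: the two-point function `R_i = 1 + t U_i T_{i+1}`
takes the factorized form `R (1-αy^{i+1})(1-αy^{i+4})/((1-αy^{i+2})(1-αy^{i+3}))`
with `R = (1-αy²)(1-αy³)/((1-αy)(1-αy⁴))`, and `R = 1 + tUT`. -/
theorem bipMaps2par_Ri_factorized {K : Type*} [Field K] (y α : K)
    (hy : y ≠ 0) (hα : α ≠ 0) (hy1 : 1 + y ≠ 0)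
    (hyn : ∀ n : ℕ, 1 ≤ n → 1 - y ^ n ≠ 0)
    (hαyn : ∀ n : ℕ, 1 ≤ n → 1 - α * y ^ n ≠ 0)
    (t z T U : K)
    (ht : t = y * (1 - α * y) ^ 2 * (1 - α * y ^ 4) / ((1 + y) ^ 2 * (1 - α * y ^ 2) ^ 3))
    (hz : z = α * (1 - y) ^ 2 * (1 - y ^ 2) * (1 + α * y ^ 2) /
        ((1 - α * y) ^ 2 * (1 - α * y ^ 4)))
    (hT : T = α * (1 - y ^ 2) ^ 2 * (1 - α * y ^ 2) / ((1 - α * y) ^ 2 * (1 - α * y ^ 4)))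
    (hU : U = (1 + y) * (1 - α * y ^ 2) ^ 2 / ((1 - α * y) * (1 - α * y ^ 4)))
    (Ti Ui : ℕ → K)
    (hTi : ∀ i : ℕ, Ti i = T * ((1 - y ^ i) * (1 - α ^ 2 * y ^ (i + 4))) /
        ((1 - α * y ^ (i + 1)) * (1 - α * y ^ (i + 3))))
    (hUi : ∀ i : ℕ, Ui i = U * ((1 - y ^ i) * (1 - α * y ^ (i + 4))) /
        ((1 - y ^ (i + 1)) * (1 - α * y ^ (i + 3))))
    (R : K)
    (hR : R = (1 - α * y ^ 2) * (1 - α * y ^ 3) / ((1 - α * y) * (1 - α * y ^ 4))) :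
    (∀ i : ℕ, 1 ≤ i →
      1 + t * Ui i * Ti (i + 1) =
        R * ((1 - α * y ^ (i + 1)) * (1 - α * y ^ (i + 4))) /
          ((1 - α * y ^ (i + 2)) * (1 - α * y ^ (i + 3)))) ∧
    R = 1 + t * U * T := by
  have h1 : 1 - α * y ≠ 0 := by have := hαyn 1 (by norm_num); rwa [pow_one] at this
  have h2 := hαyn 2 (by norm_num)
  have h4 := hαyn 4 (by norm_num)
  refine ⟨fun i _ => ?_, bipMaps2par_aux2 y α hy1 h1 h2 h4 t T U R ht hT hU hR⟩
  have hx1 := hyn (i + 1) (by omega)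
  have hb2 := hαyn (i + 2) (by omega)
  have hb3 := hαyn (i + 3) (by omega)
  have hb4 := hαyn (i + 4) (by omega)
  rw [hUi, hTi]
  simp only [show i + 1 + 4 = i + 5 from rfl, show i + 1 + 3 = i + 4 from rfl,
    show i + 1 + 1 = i + 2 from rfl, pow_add y i, pow_one] at hx1 hb2 hb3 hb4 ⊢
  generalize y ^ i = x at hx1 hb2 hb3 hb4 ⊢
  exact bipMaps2par_aux1 y α x hy1 h1 h2 h4 hx1 hb2 hb3 hb4 t T U R ht hT hU hR
end
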